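/- Let d : P₋ → P₊ be a projective presentation of weight δ with cokernel M, and suppose E(d, M) = 0 (i.e., the induced map Hom_A(P₊,M) → Hom_A(P₋,M) is surjective). Then for every quotient module N of M: δ(dim N) = dim_k Hom_A(M, N); in particular δ(dim N) = 0 if and only if N = 0, and δ(dim N) > 0 for every nonzero quotient N. -/

import Mathlib

/-!  Common setup: tropical F-polynomials and general presentations
for a finite-dimensional basic algebra `A` over `k`, following Fei,
"Tropical F-polynomials and general presentations".
All modules are *right* `A`-modules, encoded as left `Aᵐᵒᵖ`-modules. -/

namespace TropGP

open Module MulOpposite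

section Defs

variable (k : Type) [Field k]
variable (A : Type) [Ring A] [Algebra k A]

/-- The right regular `A`-module structure on `A` is compatible with the `k`-action. -/
instance instTowerOpA : IsScalarTower k Aᵐᵒᵖ A :=
  ⟨fun c b x => by
    rw [MulOpposite.smul_eq_mul_unop, MulOpposite.smul_eq_mul_unop, MulOpposite.unop_smul,
      Algebra.mul_smul_comm]⟩

/-- Shortcut instance: scalars of `k` commute with the right `A`-action. -/
instance (priority := 5000) instSMulCommOpK (M : Type) [AddCommGroup M] [Module k M]
    [Module Aᵐᵒᵖ M] [IsScalarTower k Aᵐᵒᵖ M] : SMulCommClass Aᵐᵒᵖ k M :=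
  IsScalarTower.to_smulCommClass'

variable {n : ℕ} (e : Fin n → A)

/-- Pairing of a weight vector with an integral (dimension) vector. -/
def pz (δ β : Fin n → ℤ) : ℤ := ∑ i, δ i * β i

/-- Pairing of an integral weight vector with a real vector. -/
def przr (δ : Fin n → ℤ) (γ : Fin n → ℝ) : ℝ := ∑ i, (δ i : ℝ) * γ i

/-- Pairing of two real vectors. -/
def prr (δ γ : Fin n → ℝ) : ℝ := ∑ i, δ i * γ i

variable (M : Type) [AddCommGroup M] [Module k M] [Module Aᵐᵒᵖ M] [IsScalarTower k Aᵐᵒᵖ M]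

/-- Right multiplication by `e i`, as a `k`-linear endomorphism of a right `A`-module. -/
noncomputable def rmul (i : Fin n) : M →ₗ[k] M where
  toFun x := op (e i) • x
  map_add' x y := smul_add _ x y
  map_smul' c x := smul_comm _ c x

/-- The dimension vector: `i ↦ dim_k (M eᵢ)`. -/
noncomputable def dimVec : Fin n → ℤ :=
  fun i => (finrank k (LinearMap.range (rmul k A e M i)) : ℤ)

/-- The real dimension vector. -/
noncomputable def dimVecR : Fin n → ℝ :=
  fun i => (finrank k (LinearMap.range (rmul k A e M i)) : ℝ)

/-- The tropical F-polynomial: `f_M(δ) = max { δ(dim L) : L ⊆ M }`. -/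
noncomputable def tropF (δ : Fin n → ℤ) : ℤ :=
  sSup (Set.range fun L : Submodule Aᵐᵒᵖ M => pz δ (dimVec k A e L))

/-- The dual tropical F-polynomial: `f̌_M(δ) = max { δ(dim N) : M ↠ N }`. -/
noncomputable def tropCheck (δ : Fin n → ℤ) : ℤ :=
  sSup (Set.range fun L : Submodule Aᵐᵒᵖ M => pz δ (dimVec k A e (M ⧸ L)))

/-- The Newton polytope of `M`: the convex hull of dimension vectors of submodules. -/
noncomputable def newton : Set (Fin n → ℝ) :=
  convexHull ℝ {x | ∃ L : Submodule Aᵐᵒᵖ M, x = dimVecR k A e L}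

/-- The dual Newton polytope of `M`: convex hull of dimension vectors of quotients. -/
noncomputable def newtonCheck : Set (Fin n → ℝ) :=
  convexHull ℝ {x | ∃ L : Submodule Aᵐᵒᵖ M, x = dimVecR k A e (M ⧸ L)}

/-- King's `δ`-semistability. -/
def IsSemistable (δ : Fin n → ℤ) : Prop :=
  pz δ (dimVec k A e M) = 0 ∧ ∀ L : Submodule Aᵐᵒᵖ M, pz δ (dimVec k A e L) ≤ 0

/-- `δ`-semistability for a real weight. -/
def IsSemistableR (δ : Fin n → ℝ) : Prop :=
  prr δ (dimVecR k A e M) = 0 ∧ ∀ L : Submodule Aᵐᵒᵖ M, prr δ (dimVecR k A e L) ≤ 0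

/-- `δ`-stability. -/
def IsStable (δ : Fin n → ℤ) : Prop :=
  pz δ (dimVec k A e M) = 0 ∧
    ∀ L : Submodule Aᵐᵒᵖ M, L ≠ ⊥ → L ≠ ⊤ → pz δ (dimVec k A e L) < 0

section HomE

variable {P Q : Type} [AddCommGroup P] [Module Aᵐᵒᵖ P] [AddCommGroup Q] [Module Aᵐᵒᵖ Q]

/-- The `k`-linear map `Hom_A(Q, M) → Hom_A(P, M)` induced by `d : P → Q`. -/
noncomputable def homMap (d : P →ₗ[Aᵐᵒᵖ] Q) : (Q →ₗ[Aᵐᵒᵖ] M) →ₗ[k] (P →ₗ[Aᵐᵒᵖ] M) where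
  toFun f := f ∘ₗ d
  map_add' f g := LinearMap.add_comp _ _ _
  map_smul' c f := LinearMap.smul_comp _ _ _

/-- `dim_k Hom(d, M)`: the kernel of the induced map. -/
noncomputable def homNum (d : P →ₗ[Aᵐᵒᵖ] Q) : ℕ :=
  finrank k (LinearMap.ker (homMap k A M d))

/-- `dim_k E(d, M)`: the cokernel of the induced map. -/
noncomputable def eNum (d : P →ₗ[Aᵐᵒᵖ] Q) : ℕ :=
  finrank k ((P →ₗ[Aᵐᵒᵖ] M) ⧸ LinearMap.range (homMap k A M d))

end HomE

/-- The indecomposable projective right module `e i · A`. -/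
abbrev projP (i : Fin n) : Submodule Aᵐᵒᵖ A := Submodule.span Aᵐᵒᵖ {e i}

/-- The projective right module `P(β) = ⊕ᵢ (eᵢA)^{β i}`. -/
abbrev PP (β : Fin n → ℕ) : Type := Π i : Fin n, Fin (β i) → projP A e i

/-- The weight condition `β₊ - β₋ = δ`. -/
def HasWt (βm βp : Fin n → ℕ) (δ : Fin n → ℤ) : Prop :=
  ∀ i, (βp i : ℤ) - (βm i : ℤ) = δ i

/-- The cokernel of a projective presentation. -/
abbrev Coker {βm βp : Fin n → ℕ} (d : PP A e βm →ₗ[Aᵐᵒᵖ] PP A e βp) : Type :=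
  PP A e βp ⧸ LinearMap.range d

/-- `hom(δ, M)`: min of `dim_k Hom(d,M)` over projective presentations `d` of weight `δ`. -/
noncomputable def homWt (δ : Fin n → ℤ) : ℕ :=
  sInf {m : ℕ | ∃ (βm βp : Fin n → ℕ) (d : PP A e βm →ₗ[Aᵐᵒᵖ] PP A e βp),
    HasWt βm βp δ ∧ m = homNum k A M d}

/-- `e(δ, M)`: min of `dim_k E(d,M)` over projective presentations `d` of weight `δ`. -/
noncomputable def eWt (δ : Fin n → ℤ) : ℕ :=
  sInf {m : ℕ | ∃ (βm βp : Fin n → ℕ) (d : PP A e βm →ₗ[Aᵐᵒᵖ] PP A e βp),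
    HasWt βm βp δ ∧ m = eNum k A M d}

/-- The indecomposable left module `A · e i`. -/
abbrev projL (i : Fin n) : Submodule A A := Submodule.span A {e i}

section DualMod

variable (V : Type) [AddCommGroup V] [Module k V] [Module A V] [IsScalarTower k A V]

/-- Left multiplication by `a` as a `k`-linear endomorphism of a left module. -/
noncomputable def lact (a : A) : V →ₗ[k] V where
  toFun x := a • x
  map_add' x y := smul_add a x y
  map_smul' c x := smul_comm a c x

/-- The right `A`-action on the `k`-dual of a left `A`-module. -/
noncomputable instance dualSMul : SMul Aᵐᵒᵖ (V →ₗ[k] k) :=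
  ⟨fun a f => f ∘ₗ lact k A V a.unop⟩

@[simp] lemma dual_smul_apply (a : Aᵐᵒᵖ) (f : V →ₗ[k] k) (x : V) :
    (a • f) x = f (a.unop • x) := rfl

/-- The `k`-dual of a left `A`-module is a right `A`-module. -/
noncomputable instance dualModule : Module Aᵐᵒᵖ (V →ₗ[k] k) :=
  { dualSMul k A V with
    one_smul := fun f => by ext x; simp
    mul_smul := fun a b f => by ext x; simp [mul_smul]
    smul_zero := fun a => by ext x; simp
    smul_add := fun a f g => by ext x; simp
    add_smul := fun a b f => by ext x; simp [add_smul]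
    zero_smul := fun f => by ext x; simp }

instance dualSMulComm : SMulCommClass Aᵐᵒᵖ k (V →ₗ[k] k) :=
  ⟨fun a c f => by ext x; simp⟩

instance dualTower : IsScalarTower k Aᵐᵒᵖ (V →ₗ[k] k) :=
  ⟨fun c a f => by ext x; simp [MulOpposite.unop_smul, smul_assoc]⟩

end DualMod

/-- The indecomposable injective right module `Iᵢ = D(A eᵢ)`,
the `k`-dual of the left module `A eᵢ`. -/
abbrev IP (i : Fin n) : Type := (projL A e i) →ₗ[k] k

/-- The injective right module `I(β) = ⊕ᵢ Iᵢ^{β i}`. -/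
abbrev IM (β : Fin n → ℕ) : Type := Π i : Fin n, Fin (β i) → IP k A e i

section PostMap

variable {I J : Type} [AddCommGroup I] [Module k I] [Module Aᵐᵒᵖ I] [IsScalarTower k Aᵐᵒᵖ I]
variable [AddCommGroup J] [Module k J] [Module Aᵐᵒᵖ J] [IsScalarTower k Aᵐᵒᵖ J]

/-- The `k`-linear map `Hom_A(M, I) → Hom_A(M, J)` induced by `dc : I → J`. -/
noncomputable def postMap (dc : I →ₗ[Aᵐᵒᵖ] J) :
    (M →ₗ[Aᵐᵒᵖ] I) →ₗ[k] (M →ₗ[Aᵐᵒᵖ] J) where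
  toFun f := dc ∘ₗ f
  map_add' f g := LinearMap.comp_add _ _ _
  map_smul' c f := by
    ext x
    simp only [LinearMap.comp_apply, LinearMap.smul_apply, RingHom.id_apply]
    rw [← algebraMap_smul Aᵐᵒᵖ c (f x), LinearMap.map_smul, algebraMap_smul]

end PostMap

/-- `hom(M, δ̌)`: min of `dim_k Hom(M, ď)` over injective presentations `ď` of weight `δ̌`. -/
noncomputable def ihomWt (δc : Fin n → ℤ) : ℕ :=
  sInf {m : ℕ | ∃ (βp βm : Fin n → ℕ) (dc : IM k A e βp →ₗ[Aᵐᵒᵖ] IM k A e βm),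
    HasWt βm βp δc ∧ m = finrank k (LinearMap.ker (postMap k A M dc))}

/-- `ě(M, δ̌)`: min of `dim_k Ě(M, ď)` over injective presentations `ď` of weight `δ̌`. -/
noncomputable def ieWt (δc : Fin n → ℤ) : ℕ :=
  sInf {m : ℕ | ∃ (βp βm : Fin n → ℕ) (dc : IM k A e βp →ₗ[Aᵐᵒᵖ] IM k A e βm),
    HasWt βm βp δc ∧
      m = Module.finrank k (@HasQuotient.Quotient (M →ₗ[Aᵐᵒᵖ] IM k A e βm) _
        (Submodule.hasQuotient (M := M →ₗ[Aᵐᵒᵖ] IM k A e βm)) (LinearMap.range (postMap k A M dc)))}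

/-- `e(δ, δ) = 0`: there are projective presentations `d, d'` of weight `δ` with
`E(d, Coker d') = 0`, i.e. the induced map on `Hom`s is surjective. -/
def EWtSelfZero (δ : Fin n → ℤ) : Prop :=
  ∃ (βm βp : Fin n → ℕ) (d : PP A e βm →ₗ[Aᵐᵒᵖ] PP A e βp)
    (βm' βp' : Fin n → ℕ) (d' : PP A e βm' →ₗ[Aᵐᵒᵖ] PP A e βp'),
    HasWt βm βp δ ∧ HasWt βm' βp' δ ∧
      Function.Surjective (homMap k A (Coker A e d') d)

/-- `e₁, …, e_n` is a complete set of primitive orthogonal idempotents and `A` is basic: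
the indecomposable projectives `eᵢA` are pairwise non-isomorphic. -/
def IsBasicSetup : Prop :=
  (∀ i, IsIdempotentElem (e i)) ∧
  (∀ i j, i ≠ j → e i * e j = 0) ∧
  (∑ i, e i = 1) ∧
  (∀ i, e i ≠ 0 ∧ ∀ f g : A, IsIdempotentElem f → IsIdempotentElem g →
      f * g = 0 → g * f = 0 → f + g = e i → f = 0 ∨ g = 0) ∧
  (∀ i j, i ≠ j → IsEmpty (projP A e i ≃ₗ[Aᵐᵒᵖ] projP A e j))

end Defs

end TropGP

open TropGP Module MulOpposite

/-! Since `Hom_A(eᵢA, N) ≅ N eᵢ`, the space `Hom_A(P(β), N)` has dimension `∑ᵢ β i · dim (N eᵢ)`.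
Applying `Hom_A(-, N)` to `P₋ → P₊ → M → 0` gives the exact sequence
`0 → Hom_A(M, N) → Hom_A(P₊, N) → Hom_A(P₋, N)`; its last map is onto for `N = M` by hypothesis,
hence for every quotient `N` of `M` because `P₋` is projective. Counting dimensions yields
`δ(dim N) = dim Hom_A(M, N)`, which vanishes exactly when the projection `M ↠ N` is zero. -/

namespace TropGP

section Finiteness

variable (k : Type) [Field k]

theorem finiteDimensional_submodule {R X : Type} [Ring R] [SMul k R] [AddCommGroup X] [Module k X]
    [Module R X] [IsScalarTower k R X] [FiniteDimensional k X] (p : Submodule R X) :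
    FiniteDimensional k p :=
  inferInstanceAs (FiniteDimensional k (p.restrictScalars k))

instance finiteDimensional_projP (A : Type) [Ring A] [Algebra k A] [FiniteDimensional k A]
    {n : ℕ} (e : Fin n → A) (i : Fin n) : FiniteDimensional k (projP A e i) :=
  finiteDimensional_submodule k _

end Finiteness

section Projective

variable (A : Type) [Ring A] {n : ℕ} (e : Fin n → A)

theorem projective_pi {R ι : Type*} [Ring R] [Fintype ι] (M : ι → Type*)
    [∀ i, AddCommGroup (M i)] [∀ i, Module R (M i)] [∀ i, Module.Projective R (M i)] :
    Module.Projective R (Π i, M i) := by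
  classical
  exact .of_equiv (DirectSum.linearEquivFunOnFintype R ι M)

def opRegularEquiv : Aᵐᵒᵖ ≃ₗ[Aᵐᵒᵖ] A where
  toFun := unop
  invFun := op
  map_add' _ _ := rfl
  map_smul' _ _ := rfl
  left_inv _ := rfl
  right_inv _ := rfl

theorem mul_coe_projP {i : Fin n} (hi : IsIdempotentElem (e i)) (p : projP A e i) :
    e i * (p : A) = p := by
  obtain ⟨a, ha⟩ := Submodule.mem_span_singleton.mp p.2
  rw [← ha, MulOpposite.smul_eq_mul_unop, ← mul_assoc, hi]

def projPRetraction (i : Fin n) : A →ₗ[Aᵐᵒᵖ] projP A e i where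
  toFun a := ⟨op a • e i, Submodule.smul_mem _ _ (Submodule.mem_span_singleton_self _)⟩
  map_add' _ _ := Subtype.ext (mul_add _ _ _)
  map_smul' _ _ := Subtype.ext (mul_assoc _ _ _).symm

theorem projective_projP {i : Fin n} (hi : IsIdempotentElem (e i)) :
    Module.Projective Aᵐᵒᵖ (projP A e i) :=
  have : Module.Projective Aᵐᵒᵖ A := .of_equiv (opRegularEquiv A)
  .of_split (projP A e i).subtype (projPRetraction A e i)
    (LinearMap.ext fun p => Subtype.ext (mul_coe_projP A e hi p))

theorem projective_PP (he : ∀ i, IsIdempotentElem (e i)) (β : Fin n → ℕ) :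
    Module.Projective Aᵐᵒᵖ (PP A e β) :=
  have := fun i => projective_projP A e (he i)
  have := fun i => projective_pi (R := Aᵐᵒᵖ) fun _ : Fin (β i) => projP A e i
  projective_pi fun i => Fin (β i) → projP A e i

end Projective

section HomFromProjective

variable (k : Type) [Field k] (A : Type) [Ring A] [Algebra k A] {n : ℕ} (e : Fin n → A)
variable (N : Type) [AddCommGroup N] [Module k N] [Module Aᵐᵒᵖ N] [IsScalarTower k Aᵐᵒᵖ N]

def genP (i : Fin n) : projP A e i := ⟨e i, Submodule.mem_span_singleton_self _⟩

def evalGenP (i : Fin n) : (projP A e i →ₗ[Aᵐᵒᵖ] N) →ₗ[k] N where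
  toFun f := f (genP A e i)
  map_add' _ _ := rfl
  map_smul' _ _ := rfl

theorem evalGenP_injective (i : Fin n) : Function.Injective (evalGenP k A e N i) := by
  intro f g hfg
  refine LinearMap.ext fun p => ?_
  obtain ⟨a, ha⟩ := Submodule.mem_span_singleton.mp p.2
  obtain rfl : a • genP A e i = p := Subtype.ext ha
  rw [map_smul, map_smul]
  exact congrArg (a • ·) hfg

theorem range_evalGenP {i : Fin n} (hi : IsIdempotentElem (e i)) :
    LinearMap.range (evalGenP k A e N i) = LinearMap.range (rmul k A e N i) := by
  ext x
  constructor
  · rintro ⟨f, rfl⟩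
    refine ⟨f (genP A e i), ?_⟩
    show op (e i) • f (genP A e i) = f (genP A e i)
    rw [← map_smul]
    exact congrArg f (Subtype.ext hi)
  · rintro ⟨y, rfl⟩
    refine ⟨LinearMap.toSpanSingleton Aᵐᵒᵖ N (op (e i) • y) ∘ₗ
      (opRegularEquiv A).symm.toLinearMap ∘ₗ (projP A e i).subtype, ?_⟩
    show op (e i) • op (e i) • y = op (e i) • y
    rw [smul_smul, ← op_mul, hi]

theorem finrank_hom_projP {i : Fin n} (hi : IsIdempotentElem (e i)) :
    finrank k (projP A e i →ₗ[Aᵐᵒᵖ] N) = finrank k (LinearMap.range (rmul k A e N i)) := by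
  rw [← range_evalGenP k A e N hi, LinearMap.finrank_range_of_inj (evalGenP_injective k A e N i)]

def homPPEquiv (β : Fin n → ℕ) :
    (PP A e β →ₗ[Aᵐᵒᵖ] N) ≃ₗ[k] Π i, Fin (β i) → (projP A e i →ₗ[Aᵐᵒᵖ] N) :=
  (LinearMap.lsum Aᵐᵒᵖ (fun i => Fin (β i) → projP A e i) k).symm.trans
    (LinearEquiv.piCongrRight fun i => (LinearMap.lsum Aᵐᵒᵖ (fun _ => projP A e i) k).symm)

theorem finrank_hom_PP [FiniteDimensional k A] [FiniteDimensional k N]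
    (he : ∀ i, IsIdempotentElem (e i)) (β : Fin n → ℕ) :
    finrank k (PP A e β →ₗ[Aᵐᵒᵖ] N) = ∑ i, β i * finrank k (LinearMap.range (rmul k A e N i)) := by
  simp only [(homPPEquiv k A e N β).finrank_eq, Module.finrank_pi_fintype, Finset.sum_const,
    Finset.card_univ, Fintype.card_fin, smul_eq_mul, finrank_hom_projP k A e N (he _)]

end HomFromProjective

section HomFromCokernel

variable (k : Type) [Field k] (A : Type) [Ring A] [Algebra k A]
variable {P Q : Type} [AddCommGroup P] [Module Aᵐᵒᵖ P] [AddCommGroup Q] [Module Aᵐᵒᵖ Q]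
variable (N : Type) [AddCommGroup N] [Module k N] [Module Aᵐᵒᵖ N] [IsScalarTower k Aᵐᵒᵖ N]

theorem homMap_mkQ_injective (p : Submodule Aᵐᵒᵖ Q) : Function.Injective (homMap k A N p.mkQ) :=
  fun _ _ h => Submodule.linearMap_qext _ h

theorem range_homMap_mkQ (d : P →ₗ[Aᵐᵒᵖ] Q) :
    LinearMap.range (homMap k A N (LinearMap.range d).mkQ) = LinearMap.ker (homMap k A N d) := by
  ext g
  constructor
  · rintro ⟨f, rfl⟩
    refine LinearMap.ext fun x => ?_
    show f (Submodule.Quotient.mk (d x)) = 0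
    rw [(Submodule.Quotient.mk_eq_zero _).2 (LinearMap.mem_range_self d x), map_zero]
  · intro hg
    refine ⟨(LinearMap.range d).liftQ g ?_, (LinearMap.range d).liftQ_mkQ g _⟩
    rintro _ ⟨x, rfl⟩
    exact LinearMap.congr_fun (LinearMap.mem_ker.mp hg) x

theorem finrank_hom_coker_add [FiniteDimensional k (Q →ₗ[Aᵐᵒᵖ] N)] (d : P →ₗ[Aᵐᵒᵖ] Q)
    (hd : Function.Surjective (homMap k A N d)) :
    finrank k ((Q ⧸ LinearMap.range d) →ₗ[Aᵐᵒᵖ] N) + finrank k (P →ₗ[Aᵐᵒᵖ] N) =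
      finrank k (Q →ₗ[Aᵐᵒᵖ] N) := by
  rw [← LinearMap.finrank_range_of_inj (homMap_mkQ_injective k A N _), range_homMap_mkQ,
    ← (homMap k A N d).finrank_range_add_finrank_ker, LinearMap.range_eq_top.2 hd, finrank_top,
    add_comm]

theorem homMap_surjective_of_surjective [Module.Projective Aᵐᵒᵖ P] {M : Type} [AddCommGroup M]
    [Module k M] [Module Aᵐᵒᵖ M] [IsScalarTower k Aᵐᵒᵖ M] {d : P →ₗ[Aᵐᵒᵖ] Q}
    (hd : Function.Surjective (homMap k A M d)) (π : M →ₗ[Aᵐᵒᵖ] N) (hπ : Function.Surjective π) :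
    Function.Surjective (homMap k A N d) := by
  intro g
  obtain ⟨g', rfl⟩ := Module.projective_lifting_property π g hπ
  obtain ⟨f, rfl⟩ := hd g'
  exact ⟨π ∘ₗ f, LinearMap.comp_assoc _ _ _⟩

theorem finrank_hom_quotient_eq_zero_iff {M : Type} [AddCommGroup M] [Module k M] [Module Aᵐᵒᵖ M]
    [IsScalarTower k Aᵐᵒᵖ M] [FiniteDimensional k M] (K : Submodule Aᵐᵒᵖ M) :
    finrank k (M →ₗ[Aᵐᵒᵖ] M ⧸ K) = 0 ↔ K = ⊤ := by
  rw [finrank_zero_iff]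
  constructor
  · intro _
    rw [← K.ker_mkQ, Subsingleton.elim K.mkQ 0, LinearMap.ker_zero]
  · rintro rfl
    infer_instance

end HomFromCokernel

theorem pz_eq_of_hasWt {n : ℕ} {βm βp : Fin n → ℕ} {δ : Fin n → ℤ} (hw : HasWt βm βp δ)
    (v : Fin n → ℤ) : pz δ v = ∑ i, (βp i : ℤ) * v i - ∑ i, (βm i : ℤ) * v i := by
  simp only [pz, ← hw _, sub_mul, Finset.sum_sub_distrib]

theorem pz_dimVec_eq_finrank_hom_coker (k : Type) [Field k] (A : Type) [Ring A] [Algebra k A]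
    [FiniteDimensional k A] {n : ℕ} (e : Fin n → A) (he : ∀ i, IsIdempotentElem (e i))
    {βm βp : Fin n → ℕ} {δ : Fin n → ℤ} (hw : HasWt βm βp δ) (d : PP A e βm →ₗ[Aᵐᵒᵖ] PP A e βp)
    (N : Type) [AddCommGroup N] [Module k N] [Module Aᵐᵒᵖ N] [IsScalarTower k Aᵐᵒᵖ N]
    [FiniteDimensional k N] (hd : Function.Surjective (homMap k A N d)) :
    pz δ (dimVec k A e N) = finrank k (Coker A e d →ₗ[Aᵐᵒᵖ] N) := by
  have h := finrank_hom_coker_add k A N d hd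
  rw [finrank_hom_PP k A e N he, finrank_hom_PP k A e N he] at h
  have h' := congrArg (Nat.cast : ℕ → ℤ) h
  push_cast at h'
  simp only [pz_eq_of_hasWt hw, dimVec]
  linarith

end TropGP

theorem statement13_general (k : Type) [Field k]
    (A : Type) [Ring A] [Algebra k A] [FiniteDimensional k A]
    {n : ℕ} (e : Fin n → A) (hA : IsBasicSetup A e)
    (βm βp : Fin n → ℕ) (d : PP A e βm →ₗ[Aᵐᵒᵖ] PP A e βp)
    (δ : Fin n → ℤ) (hw : HasWt βm βp δ)
    (hrig : Function.Surjective (homMap k A (Coker A e d) d)) :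
    ∀ K : Submodule Aᵐᵒᵖ (Coker A e d),
      pz δ (dimVec k A e (Coker A e d ⧸ K)) =
        (finrank k (Coker A e d →ₗ[Aᵐᵒᵖ] (Coker A e d ⧸ K)) : ℤ) ∧
      (pz δ (dimVec k A e (Coker A e d ⧸ K)) = 0 ↔ K = ⊤) ∧
      (K ≠ ⊤ → 0 < pz δ (dimVec k A e (Coker A e d ⧸ K))) := by
  intro K
  have he : ∀ i, IsIdempotentElem (e i) := hA.1
  have := projective_PP A e he βm
  have hK := pz_dimVec_eq_finrank_hom_coker k A e he hw d _
    (homMap_surjective_of_surjective k A _ hrig K.mkQ K.mkQ_surjective)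
  have hzero : pz δ (dimVec k A e (Coker A e d ⧸ K)) = 0 ↔ K = ⊤ := by
    rw [hK, Nat.cast_eq_zero, finrank_hom_quotient_eq_zero_iff]
  refine ⟨hK, hzero, fun hne => ?_⟩
  rw [hK] at hzero ⊢
  exact (Nat.cast_nonneg _).lt_of_ne fun h => hne (hzero.1 h.symm)

/-- Let `d` be a projective presentation of weight `δ` with cokernel `M`
and suppose `E(d,M) = 0`.  Then for every quotient `N` of `M`:
`δ(dim N) = dim_k Hom_A(M,N)`; in particular `δ(dim N) = 0` iff `N = 0`, and
`δ(dim N) > 0` for every nonzero quotient. -/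
theorem statement13 (k : Type) [Field k] [IsAlgClosed k] [CharZero k]
    (A : Type) [Ring A] [Algebra k A] [FiniteDimensional k A]
    {n : ℕ} (e : Fin n → A) (hA : IsBasicSetup A e)
    (βm βp : Fin n → ℕ) (d : PP A e βm →ₗ[Aᵐᵒᵖ] PP A e βp)
    (δ : Fin n → ℤ) (hw : HasWt βm βp δ)
    (hrig : Function.Surjective (homMap k A (Coker A e d) d)) :
    ∀ K : Submodule Aᵐᵒᵖ (Coker A e d),
      pz δ (dimVec k A e (Coker A e d ⧸ K)) =
        (finrank k (Coker A e d →ₗ[Aᵐᵒᵖ] (Coker A e d ⧸ K)) : ℤ) ∧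
      (pz δ (dimVec k A e (Coker A e d ⧸ K)) = 0 ↔ K = ⊤) ∧
      (K ≠ ⊤ → 0 < pz δ (dimVec k A e (Coker A e d ⧸ K))) :=
  statement13_general k A e hA βm βp d δ hw hrig
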